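/- Let G be a finite p-group with C_G(Φ(G)) ≤ Φ(G), and let H₁ = Ω₁(H) where H is the preimage of Ω₁(ζ₂(G)/ζ₁(G)). Then the ring D₁ = Der(G, H₁) satisfies D₁³ = 0; consequently Aut_{H₁}(G) is nilpotent of class at most 2. -/

import Mathlib

/-- A derivation from `G` into a set `S ⊆ G` (for the conjugation action). -/
def IsDerivationInto {G : Type*} [Group G] (S : Set G) (δ : G → G) : Prop :=
  (∀ x, δ x ∈ S) ∧ ∀ x y : G, δ (x * y) = y⁻¹ * δ x * y * δ y

/-!
Φ(G) lies in the kernel of every homomorphism into an elementary abelian `p`-group, since such a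
group is an `𝔽_p`-vector space and so has trivial Frattini subgroup. Applied to `x ↦ ⁅h, x⁆` for
`h ∈ H₁` this gives `H₁ ≤ C_G(Φ(G)) ≤ Φ(G)`; in particular `H₁` is abelian. Let `W = ⁅H₁, G⁆`, a
central subgroup. Modulo `W` a derivation `δ` into `H₁` is a homomorphism into an elementary abelian
group, so `δ(Φ(G)) ≤ W`; and `x ↦ x δ(x)` is an endomorphism fixing every `⁅h, x⁆`, so `δ(W) = 1`.
Hence `δ₃ δ₂ δ₁ = 1`.

For `σ, τ ∈ Aut_{H₁}(G)` with displacements `d(x) = x⁻¹ σ(x)` and `e(x) = x⁻¹ τ(x)` one computes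
`τ(σ k)⁻¹ σ(τ k) = e(d k)⁻¹ d(e k)`, which lies in `W` and is trivial for `k ∈ Φ(G)`. So `⁅σ, τ⁆`
moves elements only by `W` and fixes `H₁ ⊆ Φ(G)`, while `ρ ∈ Aut_{H₁}(G)` fixes `W` and moves
elements only by `H₁`; two such automorphisms commute.
-/

open scoped commutatorElement

section

open Subgroup

theorem Order.radical_eq_bot {α : Type*} [CompleteLattice α] [IsModularLattice α]
    [ComplementedLattice α] [IsAtomic α] : Order.radical α = ⊥ := by
  by_contra hne
  obtain ⟨a, ha, hle⟩ := (eq_bot_or_exists_atom_le (Order.radical α)).resolve_left hne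
  obtain ⟨c, hc⟩ := exists_isCompl a
  exact ha.1 <| hc.disjoint.eq_bot_of_le <|
    hle.trans (Order.radical_le_coatom (hc.isAtom_iff_isCoatom.mp ha))

theorem frattini_eq_bot_of_pow_eq_one {A : Type*} [CommGroup A] {p : ℕ} (hp : p.Prime)
    (hA : ∀ a : A, a ^ p = 1) : frattini A = ⊥ := by
  have : Fact p.Prime := ⟨hp⟩
  obtain ⟨_⟩ : Nonempty (Module (ZMod p) (Additive A)) := ⟨AddCommGroup.zmodModule hA⟩
  let e : Subgroup A ≃o Submodule (ZMod p) (Additive A) :=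
    Subgroup.toAddSubgroup.trans (AddSubgroup.toZModSubmodule p)
  rw [← e.apply_eq_iff_eq, e.map_bot, frattini, e.map_radical, Order.radical_eq_bot]

theorem frattini_le_ker_of_commute_of_pow_eq_one {G K : Type*} [Group G] [Group K] {p : ℕ}
    (hp : p.Prime) (f : G →* K) (hcomm : ∀ x y, Commute (f x) (f y))
    (hpow : ∀ x, f x ^ p = 1) : frattini G ≤ f.ker := by
  let _ : CommGroup f.range :=
    { mul_comm := by
        rintro ⟨_, x, rfl⟩ ⟨_, y, rfl⟩
        exact Subtype.ext (hcomm x y) }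
  have hbot : frattini f.range = ⊥ :=
    frattini_eq_bot_of_pow_eq_one hp (by rintro ⟨_, x, rfl⟩; exact Subtype.ext (hpow x))
  calc frattini G ≤ (frattini f.range).comap f.rangeRestrict :=
        frattini_le_comap_frattini_of_surjective f.rangeRestrict_surjective
    _ = f.ker := by rw [hbot, MonoidHom.comap_bot, f.ker_rangeRestrict]

section Commutator

variable {G : Type*} [Group G]

theorem commutatorElement_mem_center_of_mem_upperCentralSeries_two {h : G}
    (hh : h ∈ Subgroup.upperCentralSeries G 2) (x : G) : ⁅h, x⁆ ∈ center G := by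
  simpa [Subgroup.upperCentralSeries_one, commutatorElement_def] using
    Subgroup.mem_upperCentralSeries_succ_iff.mp hh x

theorem commutatorElement_mul_right_of_mem_center {h y : G} (hy : ⁅h, y⁆ ∈ center G) (x : G) :
    ⁅h, x * y⁆ = ⁅h, x⁆ * ⁅h, y⁆ := by
  rw [commutatorElement_mul_right_eq_mul_conj, mul_assoc _ x, mem_center_iff.mp hy x,
    mul_assoc, mul_inv_cancel_right]

theorem commutatorElement_mul_left_of_mem_center {a b : G} (hb : b ∈ center G) (x : G) :
    ⁅a * b, x⁆ = ⁅a, x⁆ := by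
  rw [commutatorElement_mul_left_eq_conj_mul,
    (Commute.symm (mem_center_iff.mp hb x)).commutator_eq, mul_one, mul_inv_cancel, one_mul]

theorem commutatorElement_pow_left_of_mem_center {h x : G} (hc : ⁅h, x⁆ ∈ center G) (n : ℕ) :
    ⁅h ^ n, x⁆ = ⁅h, x⁆ ^ n := by
  induction n with
  | zero => simp
  | succ n ih =>
    rw [pow_succ, commutatorElement_mul_left_eq_conj_mul, mem_center_iff.mp hc, ih,
      mul_inv_cancel_right, pow_succ']

def commutatorLeftHom {h : G} (hh : h ∈ Subgroup.upperCentralSeries G 2) : G →* G :=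
  MonoidHom.mk' (fun x ↦ ⁅h, x⁆) fun x y ↦
    commutatorElement_mul_right_of_mem_center
      (commutatorElement_mem_center_of_mem_upperCentralSeries_two hh y) x

end Commutator

variable {G : Type*} [Group G] {p : ℕ}

-- The paper's `H₁ = Ω₁(H)`: as `H ≤ ζ₂(G)`, it consists of the elements of `ζ₂(G)` of order
-- dividing `p`.
def omegaOneZetaTwo (G : Type*) [Group G] (p : ℕ) : Set G :=
  {h | h ∈ Subgroup.upperCentralSeries G 2 ∧ h ^ p = 1}

theorem omegaOneZetaTwo_subset_centralizer_frattini (hp : p.Prime) :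
    omegaOneZetaTwo G p ⊆ centralizer (frattini G : Set G) := by
  rintro h ⟨hh, hhp⟩
  have hcenter := commutatorElement_mem_center_of_mem_upperCentralSeries_two hh
  have hker := frattini_le_ker_of_commute_of_pow_eq_one hp (commutatorLeftHom hh)
    (fun x y ↦ (mem_center_iff.mp (hcenter x) ⁅h, y⁆).symm)
    (fun x ↦ show ⁅h, x⁆ ^ p = 1 by
      rw [← commutatorElement_pow_left_of_mem_center (hcenter x), hhp, commutatorElement_one_left])
  exact mem_centralizer_iff.mpr fun g hg ↦
    (commutatorElement_eq_one_iff_commute.mp (hker hg)).symm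

section FrattiniCentralizer

variable (hp : p.Prime) (hc : centralizer (frattini G : Set G) ≤ frattini G)
include hp hc

theorem omegaOneZetaTwo_subset_frattini : omegaOneZetaTwo G p ⊆ frattini G :=
  fun _ hh ↦ hc (omegaOneZetaTwo_subset_centralizer_frattini hp hh)

theorem commute_of_mem_omegaOneZetaTwo {a b : G} (ha : a ∈ omegaOneZetaTwo G p)
    (hb : b ∈ omegaOneZetaTwo G p) : Commute a b :=
  (mem_centralizer_iff.mp (omegaOneZetaTwo_subset_centralizer_frattini hp ha) b
    (omegaOneZetaTwo_subset_frattini hp hc hb)).symm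

end FrattiniCentralizer

def omegaCommutator (G : Type*) [Group G] (p : ℕ) : Subgroup G :=
  closure {g | ∃ h ∈ omegaOneZetaTwo G p, ∃ x, ⁅h, x⁆ = g}

theorem commutatorElement_mem_omegaCommutator {h : G} (hh : h ∈ omegaOneZetaTwo G p) (x : G) :
    ⁅h, x⁆ ∈ omegaCommutator G p :=
  subset_closure ⟨h, hh, x, rfl⟩

theorem omegaCommutator_le_center : omegaCommutator G p ≤ center G :=
  closure_le _ |>.mpr <| by
    rintro _ ⟨h, hh, x, rfl⟩
    exact commutatorElement_mem_center_of_mem_upperCentralSeries_two hh.1 x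

instance : (omegaCommutator G p).Normal :=
  ⟨fun n hn g ↦ by rwa [mem_center_iff.mp (omegaCommutator_le_center hn) g, mul_inv_cancel_right]⟩

theorem commute_mk_of_mem_omegaOneZetaTwo {a : G} (ha : a ∈ omegaOneZetaTwo G p) (y : G) :
    Commute (QuotientGroup.mk' (omegaCommutator G p) a) (QuotientGroup.mk' _ y) := by
  rw [← commutatorElement_eq_one_iff_commute, ← map_commutatorElement, QuotientGroup.mk'_apply,
    QuotientGroup.eq_one_iff]
  exact commutatorElement_mem_omegaCommutator ha y

namespace IsDerivationInto

variable {S : Set G} {δ : G → G}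

def toMonoidHom (hδ : IsDerivationInto S δ) : G →* G :=
  MonoidHom.mk' (fun x ↦ x * δ x) fun x y ↦ by rw [hδ.2]; group

theorem toMonoidHom_apply (hδ : IsDerivationInto S δ) (x : G) : hδ.toMonoidHom x = x * δ x :=
  rfl

theorem mem_omegaCommutator_of_mem_frattini (hp : p.Prime)
    (hδ : IsDerivationInto (omegaOneZetaTwo G p) δ) {g : G} (hg : g ∈ frattini G) :
    δ g ∈ omegaCommutator G p := by
  let π := QuotientGroup.mk' (omegaCommutator G p)
  let f : G →* G ⧸ omegaCommutator G p := MonoidHom.mk' (fun x ↦ π (δ x)) fun x y ↦ by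
    rw [hδ.2, map_mul, map_mul, map_mul, map_inv, mul_assoc _ (π (δ x)),
      (commute_mk_of_mem_omegaOneZetaTwo (hδ.1 x) y).eq, inv_mul_cancel_left]
  have hker := frattini_le_ker_of_commute_of_pow_eq_one hp f
    (fun x y ↦ commute_mk_of_mem_omegaOneZetaTwo (hδ.1 x) (δ y))
    (fun x ↦ by rw [MonoidHom.mk'_apply, ← map_pow, (hδ.1 x).2, map_one])
  exact (QuotientGroup.eq_one_iff _).mp (hker hg)

theorem eq_one_of_mem_omegaCommutator (hp : p.Prime)
    (hc : centralizer (frattini G : Set G) ≤ frattini G)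
    (hδ : IsDerivationInto (omegaOneZetaTwo G p) δ) {w : G} (hw : w ∈ omegaCommutator G p) :
    δ w = 1 := by
  suffices omegaCommutator G p ≤ MonoidHom.eqLocus hδ.toMonoidHom (MonoidHom.id G) by
    have hfix : hδ.toMonoidHom w = w := this hw
    rwa [toMonoidHom_apply, mul_eq_left] at hfix
  refine closure_le _ |>.mpr ?_
  rintro _ ⟨h, hh, x, rfl⟩
  have hδh : δ h ∈ center G := omegaCommutator_le_center <|
    hδ.mem_omegaCommutator_of_mem_frattini hp (omegaOneZetaTwo_subset_frattini hp hc hh)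
  change hδ.toMonoidHom ⁅h, x⁆ = ⁅h, x⁆
  rw [map_commutatorElement, toMonoidHom_apply, toMonoidHom_apply,
    commutatorElement_mul_left_of_mem_center hδh, commutatorElement_mul_right_of_mem_center
      (commutatorElement_mem_center_of_mem_upperCentralSeries_two hh.1 _),
    (commute_of_mem_omegaOneZetaTwo hp hc hh (hδ.1 x)).commutator_eq, mul_one]

end IsDerivationInto

theorem isDerivationInto_inv_mul_apply {S : Set G} (σ : MulAut G) (hσ : ∀ x, x⁻¹ * σ x ∈ S) :
    IsDerivationInto S fun x ↦ x⁻¹ * σ x :=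
  ⟨hσ, fun x y ↦ by simp only [map_mul]; group⟩

theorem apply_eq_self_of_mem_omegaCommutator (hp : p.Prime)
    (hc : centralizer (frattini G : Set G) ≤ frattini G) {σ : MulAut G}
    (hσ : ∀ x, x⁻¹ * σ x ∈ omegaOneZetaTwo G p) {w : G} (hw : w ∈ omegaCommutator G p) :
    σ w = w :=
  (inv_mul_eq_one.mp ((isDerivationInto_inv_mul_apply σ hσ).eq_one_of_mem_omegaCommutator
    hp hc hw)).symm

theorem inv_mul_apply_mem_omegaCommutator_of_mem_frattini (hp : p.Prime) {σ : MulAut G}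
    (hσ : ∀ x, x⁻¹ * σ x ∈ omegaOneZetaTwo G p) {g : G} (hg : g ∈ frattini G) :
    g⁻¹ * σ g ∈ omegaCommutator G p :=
  (isDerivationInto_inv_mul_apply σ hσ).mem_omegaCommutator_of_mem_frattini hp hg

namespace MulAut

theorem commutatorElement_apply_apply_apply (σ τ : MulAut G) (k : G) :
    ⁅σ, τ⁆ (τ (σ k)) = σ (τ k) := by
  simp [commutatorElement_def]

theorem inv_apply_apply_mul_apply_apply {σ τ : MulAut G} {k : G}
    (hk : Commute (k⁻¹ * σ k) (k⁻¹ * τ k)) :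
    (τ (σ k))⁻¹ * σ (τ k) =
      ((k⁻¹ * σ k)⁻¹ * τ (k⁻¹ * σ k))⁻¹ * ((k⁻¹ * τ k)⁻¹ * σ (k⁻¹ * τ k)) := by
  have hk' : τ k * k⁻¹ * σ k = σ k * k⁻¹ * τ k := by
    simpa [mul_assoc] using congrArg (k * ·) hk.eq.symm
  simp only [map_mul, map_inv]
  calc (τ (σ k))⁻¹ * σ (τ k)
      = (τ (σ k))⁻¹ * (τ k * k⁻¹ * σ k) * (τ k)⁻¹ * k * (σ k)⁻¹ * σ (τ k) := by rw [hk']; group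
    _ = _ := by group

theorem commute_of_apply_inv_mul_apply {γ ρ : MulAut G}
    (hγ : ∀ x, γ (x⁻¹ * ρ x) = x⁻¹ * ρ x) (hρ : ∀ x, ρ (x⁻¹ * γ x) = x⁻¹ * γ x)
    (hcomm : ∀ x, Commute (x⁻¹ * γ x) (x⁻¹ * ρ x)) : Commute γ ρ := by
  ext x
  calc γ (ρ x) = γ (x * (x⁻¹ * ρ x)) := by rw [mul_inv_cancel_left]
    _ = x * (x⁻¹ * γ x) * (x⁻¹ * ρ x) := by rw [map_mul, hγ, mul_inv_cancel_left]
    _ = x * (x⁻¹ * ρ x) * (x⁻¹ * γ x) := by rw [mul_assoc, (hcomm x).eq, ← mul_assoc]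
    _ = ρ (γ x) := by rw [← hρ, mul_inv_cancel_left, ← map_mul, mul_inv_cancel_left]

end MulAut

section AutOmegaOneZetaTwo

variable (hp : p.Prime) (hc : centralizer (frattini G : Set G) ≤ frattini G) {σ τ : MulAut G}
  (hσ : ∀ x, x⁻¹ * σ x ∈ omegaOneZetaTwo G p) (hτ : ∀ x, x⁻¹ * τ x ∈ omegaOneZetaTwo G p)
include hp hc hσ hτ

theorem inv_mul_commutatorElement_apply_mem_omegaCommutator (y : G) :
    y⁻¹ * ⁅σ, τ⁆ y ∈ omegaCommutator G p := by
  obtain ⟨k, rfl⟩ : ∃ k, τ (σ k) = y := ⟨σ⁻¹ (τ⁻¹ y), by simp⟩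
  rw [MulAut.commutatorElement_apply_apply_apply,
    MulAut.inv_apply_apply_mul_apply_apply (commute_of_mem_omegaOneZetaTwo hp hc (hσ k) (hτ k))]
  exact mul_mem
    (inv_mem (inv_mul_apply_mem_omegaCommutator_of_mem_frattini hp hτ
      (omegaOneZetaTwo_subset_frattini hp hc (hσ k))))
    (inv_mul_apply_mem_omegaCommutator_of_mem_frattini hp hσ
      (omegaOneZetaTwo_subset_frattini hp hc (hτ k)))

theorem commutatorElement_apply_eq_self_of_mem_frattini {y : G} (hy : y ∈ frattini G) :
    ⁅σ, τ⁆ y = y := by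
  obtain ⟨k, rfl⟩ : ∃ k, τ (σ k) = y := ⟨σ⁻¹ (τ⁻¹ y), by simp⟩
  have hk : k ∈ frattini G := by
    simpa using characteristic_iff_le_comap.mp inferInstance (σ⁻¹ * τ⁻¹) hy
  rw [MulAut.commutatorElement_apply_apply_apply, eq_comm, ← inv_mul_eq_one,
    MulAut.inv_apply_apply_mul_apply_apply (commute_of_mem_omegaOneZetaTwo hp hc (hσ k) (hτ k)),
    apply_eq_self_of_mem_omegaCommutator hp hc hτ
      (inv_mul_apply_mem_omegaCommutator_of_mem_frattini hp hσ hk),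
    apply_eq_self_of_mem_omegaCommutator hp hc hσ
      (inv_mul_apply_mem_omegaCommutator_of_mem_frattini hp hτ hk)]
  group

end AutOmegaOneZetaTwo

end

theorem der_H1_cube_zero_and_aut_H1_class_two_general {G : Type*} [Group G]
    (p : ℕ) (hp : p.Prime)
    (hc : Subgroup.centralizer (frattini G : Set G) ≤ frattini G) :
    (∀ δ₁ δ₂ δ₃ : G → G,
      IsDerivationInto {h : G | h ∈ upperCentralSeries G 2 ∧ h ^ p = 1} δ₁ →
      IsDerivationInto {h : G | h ∈ upperCentralSeries G 2 ∧ h ^ p = 1} δ₂ →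
      IsDerivationInto {h : G | h ∈ upperCentralSeries G 2 ∧ h ^ p = 1} δ₃ →
      ∀ x : G, δ₃ (δ₂ (δ₁ x)) = 1) ∧
    (∀ σ τ ρ : MulAut G,
      (∀ x : G, x⁻¹ * σ x ∈ upperCentralSeries G 2 ∧ (x⁻¹ * σ x) ^ p = 1) →
      (∀ x : G, x⁻¹ * τ x ∈ upperCentralSeries G 2 ∧ (x⁻¹ * τ x) ^ p = 1) →
      (∀ x : G, x⁻¹ * ρ x ∈ upperCentralSeries G 2 ∧ (x⁻¹ * ρ x) ^ p = 1) →
      ⁅⁅σ, τ⁆, ρ⁆ = 1) := by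
  refine ⟨fun δ₁ δ₂ δ₃ hδ₁ hδ₂ hδ₃ x ↦ ?_, fun σ τ ρ hσ hτ hρ ↦ ?_⟩
  · have hΦ := omegaOneZetaTwo_subset_frattini hp hc (hδ₁.1 x)
    exact hδ₃.eq_one_of_mem_omegaCommutator hp hc
      (hδ₂.mem_omegaCommutator_of_mem_frattini hp hΦ)
  · have hW := inv_mul_commutatorElement_apply_mem_omegaCommutator hp hc hσ hτ
    rw [commutatorElement_eq_one_iff_commute]
    refine MulAut.commute_of_apply_inv_mul_apply (fun x ↦ ?_) (fun x ↦ ?_) (fun x ↦ ?_)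
    · exact commutatorElement_apply_eq_self_of_mem_frattini hp hc hσ hτ
        (omegaOneZetaTwo_subset_frattini hp hc (hρ x))
    · exact apply_eq_self_of_mem_omegaCommutator hp hc hρ (hW x)
    · exact (Subgroup.mem_center_iff.mp (omegaCommutator_le_center (hW x)) _).symm

/-- Let `G` be a finite `p`-group with `C_G(Φ(G)) ≤ Φ(G)` and
`H₁ = Ω₁(H) = {h ∈ ζ₂(G) : h^p = 1}` where `H` is the preimage of
`Ω₁(ζ₂(G)/ζ₁(G))`. Then the ring `D₁ = Der(G, H₁)` satisfies `D₁³ = 0`;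
consequently `Aut_{H₁}(G)` is nilpotent of class at most `2`, i.e. all its
commutators are central: `⁅⁅σ, τ⁆, ρ⁆ = 1` for all `σ, τ, ρ ∈ Aut_{H₁}(G)`. -/
theorem der_H1_cube_zero_and_aut_H1_class_two {G : Type*} [Group G] [Finite G]
    (p : ℕ) (hp : p.Prime) (hG : IsPGroup p G)
    (hc : Subgroup.centralizer (frattini G : Set G) ≤ frattini G) :
    (∀ δ₁ δ₂ δ₃ : G → G,
      IsDerivationInto {h : G | h ∈ upperCentralSeries G 2 ∧ h ^ p = 1} δ₁ →
      IsDerivationInto {h : G | h ∈ upperCentralSeries G 2 ∧ h ^ p = 1} δ₂ →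
      IsDerivationInto {h : G | h ∈ upperCentralSeries G 2 ∧ h ^ p = 1} δ₃ →
      ∀ x : G, δ₃ (δ₂ (δ₁ x)) = 1) ∧
    (∀ σ τ ρ : MulAut G,
      (∀ x : G, x⁻¹ * σ x ∈ upperCentralSeries G 2 ∧ (x⁻¹ * σ x) ^ p = 1) →
      (∀ x : G, x⁻¹ * τ x ∈ upperCentralSeries G 2 ∧ (x⁻¹ * τ x) ^ p = 1) →
      (∀ x : G, x⁻¹ * ρ x ∈ upperCentralSeries G 2 ∧ (x⁻¹ * ρ x) ^ p = 1) →
      ⁅⁅σ, τ⁆, ρ⁆ = 1) :=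
  der_H1_cube_zero_and_aut_H1_class_two_general p hp hc
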